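/- Let H be an n×n Hadamard matrix with entries h_{j,l}, and define the linear map R : M_n(ℂ) → M_{2n}(ℂ) by R(A) = Σ_{0 ≤ k,l < n} n^{-1} ⟨A, Q_H(k,l)⟩ · Σ_{0 ≤ j < n} (e_j e_{(j+k) mod n}ᵗ) ⊗ M_{j,l}, where M_{j,l} is the 2×2 identity matrix if h_{j,l} = 1 and the 2×2 matrix [[0,1],[1,0]] if h_{j,l} = −1. Then R is injective. -/

import Mathlib

open Matrix Complex Kronecker

/-- The matrix `Q_U(k,l)`: its `(j,m)` entry is `u_{j,l}` when `m ≡ j + k (mod n)`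
and `0` otherwise. -/
def matQ {n : ℕ} (U : Matrix (Fin n) (Fin n) ℂ) (k l : Fin n) : Matrix (Fin n) (Fin n) ℂ :=
  Matrix.of fun j m => if m = j + k then U j l else 0

/-- The trace inner product `⟨A, M⟩ = Tr(A M†)` on square complex matrices. -/
noncomputable def minner {n : ℕ} (A M : Matrix (Fin n) (Fin n) ℂ) : ℂ :=
  (A * M.conjTranspose).trace

lemma minner_matQ {n : ℕ} (H : Matrix (Fin n) (Fin n) ℝ) (A : Matrix (Fin n) (Fin n) ℂ)
    (k l : Fin n) :
    minner A (matQ (H.map Complex.ofReal) k l) = ∑ p : Fin n, A p (p + k) * (H p l : ℂ) := by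
  simp [minner, matQ, Matrix.trace, Matrix.mul_apply, Matrix.diag, Matrix.conjTranspose_apply,
    apply_ite, Finset.sum_ite_eq]

lemma entry_eval {n : ℕ} (H : Matrix (Fin n) (Fin n) ℝ)
    (j m : Fin n) (b : Fin 2) (c : Fin n → Fin n → ℂ) :
    (∑ k : Fin n, ∑ l : Fin n, (c k l) •
      ∑ j' : Fin n, (Matrix.single j' (j' + k) (1 : ℂ)) ⊗ₖ
        (if H j' l = 1 then (1 : Matrix (Fin 2) (Fin 2) ℂ) else !![0, 1; 1, 0])) (j, 0) (m, b)
    = ∑ l : Fin n, c (m - j) l *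
        (if H j l = 1 then (1 : Matrix (Fin 2) (Fin 2) ℂ) else !![0, 1; 1, 0]) 0 b := by
  have hinner : ∀ (k l : Fin n),
      (∑ j' : Fin n, (if j' = j ∧ j' + k = m then
        ((if H j' l = 1 then (1 : Matrix (Fin 2) (Fin 2) ℂ) else !![0, 1; 1, 0]) 0 b) else 0))
      = if k = m - j then (if H j l = 1 then (1 : Matrix (Fin 2) (Fin 2) ℂ) else !![0, 1; 1, 0]) 0 b else 0 := by
    intro k l
    rw [Finset.sum_eq_single j]
    · simp only [true_and]
      congr 1
      haveI : NeZero n := ⟨j.pos.ne'⟩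
      rw [eq_iff_iff, eq_sub_iff_add_eq, add_comm k j]
    · intro j' _ hj'; simp [hj']
    · simp
  simp only [Matrix.sum_apply, Matrix.smul_apply, Matrix.kroneckerMap_apply,
    Matrix.single, Matrix.of_apply, smul_eq_mul, ite_mul, one_mul, zero_mul, hinner,
    mul_ite, mul_zero]
  rw [Finset.sum_comm]
  simp

theorem hadamard_R_injective (n : ℕ) (H : Matrix (Fin n) (Fin n) ℝ)
    (hEnt : ∀ i j, H i j = 1 ∨ H i j = -1)
    (hH : H.transpose * H = (n : ℝ) • 1) :
    let R : Matrix (Fin n) (Fin n) ℂ → Matrix (Fin n × Fin 2) (Fin n × Fin 2) ℂ :=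
      fun A => ∑ k : Fin n, ∑ l : Fin n,
        ((n : ℂ)⁻¹ * minner A (matQ (H.map Complex.ofReal) k l)) •
          ∑ j : Fin n,
            (Matrix.single j (j + k) (1 : ℂ)) ⊗ₖ
              (if H j l = 1 then (1 : Matrix (Fin 2) (Fin 2) ℂ) else !![0, 1; 1, 0])
    Function.Injective R := by
  intro R
  rcases Nat.eq_zero_or_pos n with hn | hn
  · subst hn
    intro A B _
    ext j m
    exact j.elim0
  -- H * Hᵀ = n • 1
  have hn' : (n : ℝ) ≠ 0 := Nat.cast_ne_zero.mpr hn.ne'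
  have hHHt : H * H.transpose = (n : ℝ) • 1 := by
    have h1 : ((n : ℝ)⁻¹ • H.transpose) * H = 1 := by
      rw [Matrix.smul_mul, hH, smul_smul, inv_mul_cancel₀ hn', one_smul]
    have h2 : H * ((n : ℝ)⁻¹ • H.transpose) = 1 := mul_eq_one_comm.mp h1
    calc H * H.transpose = (n : ℝ) • (H * ((n : ℝ)⁻¹ • H.transpose)) := by
          rw [Matrix.mul_smul, smul_smul, mul_inv_cancel₀ hn', one_smul]
      _ = (n : ℝ) • 1 := by rw [h2]
  -- key formula
  have key : ∀ (A : Matrix (Fin n) (Fin n) ℂ) (j m : Fin n),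
      R A (j, 0) (m, 0) - R A (j, 0) (m, 1) = A j m := by
    intro A j m
    have hR : R A = ∑ k : Fin n, ∑ l : Fin n,
        ((n : ℂ)⁻¹ * minner A (matQ (H.map Complex.ofReal) k l)) •
          ∑ j : Fin n,
            (Matrix.single j (j + k) (1 : ℂ)) ⊗ₖ
              (if H j l = 1 then (1 : Matrix (Fin 2) (Fin 2) ℂ) else !![0, 1; 1, 0]) := rfl
    rw [hR, entry_eval H j m 0 (fun k l => (n : ℂ)⁻¹ * minner A (matQ (H.map Complex.ofReal) k l)),
      entry_eval H j m 1 (fun k l => (n : ℂ)⁻¹ * minner A (matQ (H.map Complex.ofReal) k l)),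
      ← Finset.sum_sub_distrib]
    have hMdiff : ∀ l : Fin n,
        ((n : ℂ)⁻¹ * minner A (matQ (H.map Complex.ofReal) (m - j) l)) *
          (if H j l = 1 then (1 : Matrix (Fin 2) (Fin 2) ℂ) else !![0, 1; 1, 0]) 0 0 -
        ((n : ℂ)⁻¹ * minner A (matQ (H.map Complex.ofReal) (m - j) l)) *
          (if H j l = 1 then (1 : Matrix (Fin 2) (Fin 2) ℂ) else !![0, 1; 1, 0]) 0 1
        = ((n : ℂ)⁻¹ * minner A (matQ (H.map Complex.ofReal) (m - j) l)) * (H j l : ℂ) := by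
      intro l
      rcases hEnt j l with h | h <;> rw [h] <;> norm_num [Matrix.one_apply]
    simp only [minner_matQ] at hMdiff ⊢
    simp only [hMdiff]
    have step : ∑ l : Fin n, (n : ℂ)⁻¹ * (∑ p : Fin n, A p (p + (m - j)) * (H p l : ℂ)) * (H j l : ℂ)
        = ∑ p : Fin n, A p (p + (m - j)) * ((n : ℂ)⁻¹ * ∑ l : Fin n, (H p l : ℂ) * (H j l : ℂ)) := by
      simp only [Finset.sum_mul, Finset.mul_sum]
      rw [Finset.sum_comm]
      exact Finset.sum_congr rfl fun p _ => Finset.sum_congr rfl fun l _ => by ring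
    rw [step]
    have hHH : ∀ p : Fin n, (∑ l : Fin n, (H p l : ℂ) * (H j l : ℂ)) = if p = j then (n : ℂ) else 0 := by
      intro p
      have h1 := congrFun (congrFun hHHt p) j
      simp only [Matrix.mul_apply, Matrix.transpose_apply, Matrix.smul_apply, Matrix.one_apply,
        smul_eq_mul] at h1
      have h2 : ((∑ l : Fin n, H p l * H j l : ℝ) : ℂ) = ((if p = j then (n : ℝ) else 0 : ℝ) : ℂ) := by
        rw [h1]; split <;> norm_num
      push_cast at h2
      simpa [apply_ite (fun x : ℝ => (x : ℂ))] using h2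
    simp only [hHH, mul_ite, mul_zero, mul_one, Finset.sum_ite_eq, Finset.sum_ite_eq',
      Finset.mem_univ, if_true]
    haveI : NeZero n := ⟨hn.ne'⟩
    have hjm : j + (m - j) = m := by rw [add_comm]; exact sub_add_cancel m j
    rw [hjm, inv_mul_cancel₀ (Nat.cast_ne_zero.mpr hn.ne' : (n:ℂ) ≠ 0), mul_one]
  intro A B hAB
  ext j m
  rw [← key A j m, ← key B j m, hAB]
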